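/- Under the hypotheses that the degree distribution has positive variance, E[θ] > 0, a > 0, and c > a·E[d²]/E[d], the expected equilibrium action of a random neighbor strictly exceeds the population-average equilibrium action in the friend game: Ẽ[x^friend(θ, d)] > E[x^friend(θ, d)], where Ẽ takes the degree expectation under the size-biased distribution P̃(d) = d·P(d)/E[d]. -/

import Mathlib

/-! Since `x^friend(θ, d)` is affine in `d` and types are independent of degrees, both
expectations equal `E[θ]/c + k · (mean degree)` with slope `k = a E[θ] / (c (c − a Ẽ[d])) > 0`,
the mean being `E[d]` under `P` and `Ẽ[d] = E[d²]/E[d]` under `P̃`. Positive variance is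
exactly `E[d] < E[d²]/E[d]`. -/

open Finset

theorem sum_sum_mul_mul_add {ι κ : Type*} (s : Finset ι) (t : Finset κ) (p f : ι → ℝ)
    (q g : κ → ℝ) :
    ∑ i ∈ s, ∑ j ∈ t, p i * q j * (f i + g j)
      = (∑ j ∈ t, q j) * ∑ i ∈ s, p i * f i + (∑ i ∈ s, p i) * ∑ j ∈ t, q j * g j := by
  simp_rw [mul_add, sum_add_distrib, sum_mul_sum]
  rw [sum_comm (s := t)]
  congr 1 <;> exact sum_congr rfl fun _ _ => sum_congr rfl fun _ _ => by ring

theorem lt_div_self_of_sq_lt {m s : ℝ} (hm : 0 < m) (h : m ^ 2 < s) : m < s / m := by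
  rw [lt_div_iff₀ hm]
  nlinarith

theorem neighbor_action_gt_average_action_general (a c Eθ : ℝ) (Sθ : Finset ℝ) (Sd : Finset ℕ)
    (wθ : ℝ → ℝ) (wd : ℕ → ℝ)
    (ha : 0 < a) (hEθpos : 0 < Eθ)
    (hwθ : ∑ θ ∈ Sθ, wθ θ = 1) (hwd : ∑ d ∈ Sd, wd d = 1)
    (hEθ : ∑ θ ∈ Sθ, wθ θ * θ = Eθ)
    (hEd : 0 < ∑ d ∈ Sd, wd d * (d : ℝ))
    (hvar : (∑ d ∈ Sd, wd d * (d : ℝ)) ^ 2 < ∑ d ∈ Sd, wd d * (d : ℝ) ^ 2)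
    (hc : a * ((∑ d ∈ Sd, wd d * (d : ℝ) ^ 2) / (∑ d ∈ Sd, wd d * (d : ℝ))) < c) :
    -- Ẽ[x^friend] > E[x^friend]
    (∑ θ ∈ Sθ, ∑ d ∈ Sd, wθ θ * (wd d * (d : ℝ) / (∑ d' ∈ Sd, wd d' * (d' : ℝ))) *
        (θ / c + a * (d : ℝ) * Eθ /
          (c * (c - a * ((∑ d' ∈ Sd, wd d' * (d' : ℝ) ^ 2) / (∑ d' ∈ Sd, wd d' * (d' : ℝ)))))))
    > ∑ θ ∈ Sθ, ∑ d ∈ Sd, wθ θ * wd d *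
        (θ / c + a * (d : ℝ) * Eθ /
          (c * (c - a * ((∑ d' ∈ Sd, wd d' * (d' : ℝ) ^ 2) / (∑ d' ∈ Sd, wd d' * (d' : ℝ)))))) := by
  set Ed : ℝ := ∑ d ∈ Sd, wd d * (d : ℝ)
  set Ed2 : ℝ := ∑ d ∈ Sd, wd d * (d : ℝ) ^ 2 with hEd2_def
  set D : ℝ := c * (c - a * (Ed2 / Ed))
  have hc0 : 0 < c := (mul_pos ha (div_pos ((pow_pos hEd 2).trans hvar) hEd)).trans hc
  have hslope : 0 < a * Eθ / D := div_pos (mul_pos ha hEθpos) (mul_pos hc0 (by linarith))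
  have hexpect : ∀ q : ℕ → ℝ, ∑ θ ∈ Sθ, ∑ d ∈ Sd, wθ θ * q d * (θ / c + a * (d : ℝ) * Eθ / D)
      = (∑ d ∈ Sd, q d) * (Eθ / c) + a * Eθ / D * ∑ d ∈ Sd, q d * (d : ℝ) := by
    intro q
    have htype : ∑ θ ∈ Sθ, wθ θ * (θ / c) = Eθ / c := by
      rw [← hEθ, sum_div]
      exact sum_congr rfl fun _ _ => by ring
    have hdegree : ∑ d ∈ Sd, q d * (a * (d : ℝ) * Eθ / D) = a * Eθ / D * ∑ d ∈ Sd, q d * d := by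
      rw [mul_sum]
      exact sum_congr rfl fun _ _ => by ring
    rw [sum_sum_mul_mul_add, hwθ, one_mul, htype, hdegree]
  have hbiased_mass : ∑ d ∈ Sd, wd d * (d : ℝ) / Ed = 1 := by
    rw [← sum_div, div_self hEd.ne']
  have hbiased_mean : ∑ d ∈ Sd, wd d * (d : ℝ) / Ed * d = Ed2 / Ed := by
    rw [hEd2_def, sum_div]
    exact sum_congr rfl fun _ _ => by ring
  rw [gt_iff_lt, hexpect, hexpect, hbiased_mass, hbiased_mean, hwd, add_lt_add_iff_left]
  exact mul_lt_mul_of_pos_left (lt_div_self_of_sq_lt hEd hvar) hslope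

/-- The expected equilibrium action of a random neighbor (size-biased degree weights)
strictly exceeds the population-average equilibrium action in the friend game, when
the degree distribution has positive variance. Types are independent of degrees. -/
theorem neighbor_action_gt_average_action (a c Eθ : ℝ) (Sθ : Finset ℝ) (Sd : Finset ℕ)
    (wθ : ℝ → ℝ) (wd : ℕ → ℝ)
    (ha : 0 < a) (hEθpos : 0 < Eθ)
    (hwθ0 : ∀ θ ∈ Sθ, 0 ≤ wθ θ) (hwd0 : ∀ d ∈ Sd, 0 ≤ wd d)
    (hwθ : ∑ θ ∈ Sθ, wθ θ = 1) (hwd : ∑ d ∈ Sd, wd d = 1)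
    (hEθ : ∑ θ ∈ Sθ, wθ θ * θ = Eθ)
    (hEd : 0 < ∑ d ∈ Sd, wd d * (d : ℝ))
    (hvar : (∑ d ∈ Sd, wd d * (d : ℝ)) ^ 2 < ∑ d ∈ Sd, wd d * (d : ℝ) ^ 2)
    (hc : a * ((∑ d ∈ Sd, wd d * (d : ℝ) ^ 2) / (∑ d ∈ Sd, wd d * (d : ℝ))) < c) :
    -- Ẽ[x^friend] > E[x^friend]
    (∑ θ ∈ Sθ, ∑ d ∈ Sd, wθ θ * (wd d * (d : ℝ) / (∑ d' ∈ Sd, wd d' * (d' : ℝ))) *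
        (θ / c + a * (d : ℝ) * Eθ /
          (c * (c - a * ((∑ d' ∈ Sd, wd d' * (d' : ℝ) ^ 2) / (∑ d' ∈ Sd, wd d' * (d' : ℝ)))))))
    > ∑ θ ∈ Sθ, ∑ d ∈ Sd, wθ θ * wd d *
        (θ / c + a * (d : ℝ) * Eθ /
          (c * (c - a * ((∑ d' ∈ Sd, wd d' * (d' : ℝ) ^ 2) / (∑ d' ∈ Sd, wd d' * (d' : ℝ)))))) :=
  neighbor_action_gt_average_action_general a c Eθ Sθ Sd wθ wd ha hEθpos hwθ hwd hEθ hEd hvar hc
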